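/- arXiv:1410.1654 — 2 statements merged into one kernel-verified Lean document; each statement's English description precedes it below -/
import Mathlib

section
/- Two curves γ_{p,q} and γ_{p',q'} (with p_y² ≠ q_y² and (p'_y)² ≠ (q'_y)²) coincide as subsets of ℝ² if and only if p_x = p'_x, q_x = q'_x, and q_y² − p_y² = (q'_y)² − (p'_y)². -/
/-- The curve `γ_{p,q} = {(x,y) : (x−pₓ)² + p_y² = (y−qₓ)² + q_y²}`. -/
def gammaCurve (p q : ℝ × ℝ) : Set (ℝ × ℝ) :=
  {z | (z.1 - p.1) ^ 2 + p.2 ^ 2 = (z.2 - q.1) ^ 2 + q.2 ^ 2}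

/-- Two nondegenerate curves `γ_{p,q}` and `γ_{p',q'}` coincide iff
`pₓ = p'ₓ`, `qₓ = q'ₓ`, and `q_y² − p_y² = (q'_y)² − (p'_y)²`. -/
theorem stmt5 (p q p' q' : ℝ × ℝ) (h1 : p.2 ^ 2 ≠ q.2 ^ 2) (h2 : p'.2 ^ 2 ≠ q'.2 ^ 2) :
    gammaCurve p q = gammaCurve p' q' ↔
      p.1 = p'.1 ∧ q.1 = q'.1 ∧ q.2 ^ 2 - p.2 ^ 2 = q'.2 ^ 2 - p'.2 ^ 2 := by
  constructor
  · intro heq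
    set K : ℝ := q.2 ^ 2 - p.2 ^ 2 with hK
    have key : ∀ s t : ℝ, s ^ 2 = t ^ 2 + K →
        (p.1 + s - p'.1) ^ 2 + p'.2 ^ 2 = (q.1 + t - q'.1) ^ 2 + q'.2 ^ 2 := by
      intro s t hst
      have hm : ((p.1 + s, q.1 + t) : ℝ × ℝ) ∈ gammaCurve p q := by
        simp only [gammaCurve, Set.mem_setOf_eq]
        linear_combination hst
      rw [heq] at hm
      simpa [gammaCurve] using hm
    have hKK : |K| + K ≥ 0 := by
      rcases abs_cases K with ⟨h, _⟩ | ⟨h, _⟩ <;> linarith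
    set t0 : ℝ := Real.sqrt (|K| + 1) with ht0
    set t1 : ℝ := Real.sqrt (|K| + 4) with ht1
    set s0 : ℝ := Real.sqrt (|K| + 1 + K) with hs0
    set s1 : ℝ := Real.sqrt (|K| + 4 + K) with hs1
    have habs : (0:ℝ) ≤ |K| := abs_nonneg K
    have ht0sq : t0 ^ 2 = |K| + 1 := Real.sq_sqrt (by linarith)
    have ht1sq : t1 ^ 2 = |K| + 4 := Real.sq_sqrt (by linarith)
    have hs0sq : s0 ^ 2 = |K| + 1 + K := Real.sq_sqrt (by linarith)
    have hs1sq : s1 ^ 2 = |K| + 4 + K := Real.sq_sqrt (by linarith)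
    have hs0pos : 0 < s0 := Real.sqrt_pos.mpr (by linarith)
    have hs1pos : 0 < s1 := Real.sqrt_pos.mpr (by linarith)
    have ht0nn : 0 ≤ t0 := Real.sqrt_nonneg _
    have ht1nn : 0 ≤ t1 := Real.sqrt_nonneg _
    have htne : t0 ≠ t1 := by
      intro hh
      have : t0 ^ 2 = t1 ^ 2 := by rw [hh]
      rw [ht0sq, ht1sq] at this; linarith
    have e1 := key s0 t0 (by linarith)
    have e2 := key (-s0) t0 (by rw [neg_pow]; simp; linarith)
    have e3 := key s1 t1 (by linarith)
    have e4 := key (-s1) t1 (by rw [neg_pow]; simp; linarith)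
    -- from e1, e2 : 4 * s0 * (p.1 - p'.1) = 0
    have ha : p.1 = p'.1 := by
      have h4 : 4 * s0 * (p.1 - p'.1) = 0 := by linear_combination e1 - e2
      have := mul_eq_zero.mp h4
      rcases this with h | h
      · exfalso; rcases mul_eq_zero.mp h with h | h <;> [linarith; linarith]
      · linarith
    -- now e1 : t0^2 + K + p'.2^2 = (q.1 + t0 - q'.1)^2 + q'.2^2, same for t1
    have f1 : t0 ^ 2 + K + p'.2 ^ 2 = (q.1 + t0 - q'.1) ^ 2 + q'.2 ^ 2 := by
      have := e1; rw [ha] at this; linear_combination this + ht0sq - hs0sq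
    have f3 : t1 ^ 2 + K + p'.2 ^ 2 = (q.1 + t1 - q'.1) ^ 2 + q'.2 ^ 2 := by
      have := e3; rw [ha] at this; linear_combination this + ht1sq - hs1sq
    have hc : q.1 = q'.1 := by
      have hdiff : (t0 - t1) * (2 * (q.1 - q'.1)) = 0 := by linear_combination f3 - f1
      rcases mul_eq_zero.mp hdiff with h | h
      · exact absurd (by linarith : t0 = t1) htne
      · linarith
    refine ⟨ha, hc, ?_⟩
    rw [hc] at f1
    linear_combination f1
  · rintro ⟨ha, hc, hd⟩
    ext z
    simp only [gammaCurve, Set.mem_setOf_eq]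
    rw [ha, hc]
    constructor <;> intro hh <;> linarith
end

section
/- Let A, B ⊆ ℝ be finite nonempty sets. Then E_{1.5}(A)² · |B|² ≤ E₃(A)^{2/3} · E₃(B)^{1/3} · E(A, A−B), where E_k(A) = Σ_x r_{A−A}(x)^k and E(A, F) = Σ_x r_{A−F}(x)². -/
/-!
For `s ∈ A − A` let `A_s = A ∩ (A + s)`, so that `|A_s| = r_{A−A}(s)`. With `C = A − B`, every
difference in `A_s − B` lies in `C ∩ (C + s)` (Katz–Koester), so Cauchy–Schwarz over `A_s − B`
gives `(r_{A−A}(s) |B|)² ≤ r_{C−C}(s) E(A_s, B)`. Multiplying by `r_{A−A}(s)` and applying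
Cauchy–Schwarz over `s` bounds `(E_{3/2}(A) |B|)²` by `Σ_s r_{A−A}(s) r_{C−C}(s) = E(A, C)` times
`Σ_s E(A_s, B) = Σ_t r_{A−A}(t)² r_{B−B}(t)`, and Hölder with exponents `3/2` and `3` bounds the
last sum by `E₃(A)^{2/3} E₃(B)^{1/3}`.
-/

/-- `r_{X−Y}(s)`: the number of pairs `(x,y) ∈ X×Y` with `x − y = s`. -/
noncomputable def rDiff (X Y : Finset ℝ) (s : ℝ) : ℕ :=
  ((X ×ˢ Y).filter (fun p => p.1 - p.2 = s)).card

/-- The difference set `X − Y` as a finset. -/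
noncomputable def diffSet (X Y : Finset ℝ) : Finset ℝ :=
  (X ×ˢ Y).image (fun p => p.1 - p.2)

/-- `E_k(A) = Σ_s r_{A−A}(s)^k` (real exponent). -/
noncomputable def energyK (A : Finset ℝ) (k : ℝ) : ℝ :=
  ∑ s ∈ diffSet A A, (rDiff A A s : ℝ) ^ k

/-- `E(A,F) = Σ_s r_{A−F}(s)²`. -/
noncomputable def energy2 (A F : Finset ℝ) : ℝ :=
  ∑ s ∈ diffSet A F, (rDiff A F s : ℝ) ^ 2

open Finset

lemma mem_diffSet {X Y : Finset ℝ} {s : ℝ} : s ∈ diffSet X Y ↔ ∃ x ∈ X, ∃ y ∈ Y, x - y = s := by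
  simp [diffSet, and_assoc]

lemma rDiff_eq_zero_of_notMem {X Y : Finset ℝ} {s : ℝ} (h : s ∉ diffSet X Y) :
    rDiff X Y s = 0 := by
  rw [rDiff, card_eq_zero, filter_eq_empty_iff]
  rintro ⟨x, y⟩ hxy rfl
  exact h (mem_image_of_mem _ hxy)

lemma rDiff_eq_sum_ite (X Y : Finset ℝ) (s : ℝ) :
    rDiff X Y s = ∑ x ∈ X, ∑ y ∈ Y, if x - y = s then 1 else 0 := by
  rw [rDiff, card_filter, sum_product]

lemma rDiff_eq_card_filter (X Y : Finset ℝ) (s : ℝ) : rDiff X Y s = #{x ∈ X | x - s ∈ Y} := by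
  rw [rDiff_eq_sum_ite, card_filter]
  refine sum_congr rfl fun x _ => ?_
  simp_rw [sub_eq_iff_comm, sum_ite_eq]

lemma sum_rDiff_mul {R : Type*} [CommSemiring R] (X Y : Finset ℝ) (g : ℝ → R) :
    ∑ s ∈ diffSet X Y, (rDiff X Y s : R) * g s = ∑ x ∈ X, ∑ y ∈ Y, g (x - y) := by
  rw [← sum_product' (f := fun x y => g (x - y)), sum_comp]
  simp only [nsmul_eq_mul]
  rfl

lemma sum_rDiff (X Y : Finset ℝ) : ∑ s ∈ diffSet X Y, rDiff X Y s = #X * #Y := by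
  simpa using sum_rDiff_mul (R := ℕ) X Y 1

lemma sum_rDiff_sq (X Y : Finset ℝ) :
    ∑ s ∈ diffSet X Y, rDiff X Y s ^ 2 = ∑ t ∈ diffSet X X, rDiff X X t * rDiff Y Y t := by
  have hXY := sum_rDiff_mul (R := ℕ) X Y (rDiff X Y)
  have hXX := sum_rDiff_mul (R := ℕ) X X (rDiff Y Y)
  simp only [Nat.cast_id] at hXY hXX
  simp only [sq, hXY, hXX]
  simp only [rDiff_eq_sum_ite]
  refine sum_congr rfl fun x _ => ?_
  rw [sum_comm]
  refine sum_congr rfl fun x' _ => sum_congr rfl fun y _ => sum_congr rfl fun y' _ => ?_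
  congr 1
  exact propext ⟨fun h => by linarith, fun h => by linarith⟩

noncomputable def interShift (A : Finset ℝ) (s : ℝ) : Finset ℝ := {a ∈ A | a - s ∈ A}

lemma card_interShift (A : Finset ℝ) (s : ℝ) : #(interShift A s) = rDiff A A s :=
  (rDiff_eq_card_filter A A s).symm

lemma diffSet_interShift_subset (A B : Finset ℝ) (s : ℝ) :
    diffSet (interShift A s) B ⊆ {x ∈ diffSet A B | x - s ∈ diffSet A B} := by
  intro x hx
  obtain ⟨a, ha, b, hb, rfl⟩ := mem_diffSet.1 hx
  rw [interShift, mem_filter] at ha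
  refine mem_filter.2 ⟨mem_diffSet.2 ⟨a, ha.1, b, hb, rfl⟩, mem_diffSet.2 ⟨a - s, ha.2, b, hb, ?_⟩⟩
  ring

lemma card_diffSet_interShift_le (A B : Finset ℝ) (s : ℝ) :
    #(diffSet (interShift A s) B) ≤ rDiff (diffSet A B) (diffSet A B) s := by
  rw [rDiff_eq_card_filter]
  exact card_le_card (diffSet_interShift_subset A B s)

lemma sq_rDiff_mul_card_le (A B : Finset ℝ) (s : ℝ) :
    ((rDiff A A s : ℝ) * #B) ^ 2 ≤
      rDiff (diffSet A B) (diffSet A B) s * energy2 (interShift A s) B := by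
  have h : (rDiff A A s * #B) ^ 2 ≤ rDiff (diffSet A B) (diffSet A B) s *
      ∑ x ∈ diffSet (interShift A s) B, rDiff (interShift A s) B x ^ 2 := by
    rw [← card_interShift, ← sum_rDiff]
    exact sq_sum_le_card_mul_sum_sq.trans
      (Nat.mul_le_mul_right _ (card_diffSet_interShift_le A B s))
  rw [energy2]
  exact_mod_cast h

lemma sq_rpow_three_halves_mul_card_le (A B : Finset ℝ) (s : ℝ) :
    ((rDiff A A s : ℝ) ^ ((3 : ℝ) / 2) * #B) ^ 2 ≤
      (rDiff A A s * rDiff (diffSet A B) (diffSet A B) s) * energy2 (interShift A s) B := by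
  have hr : (0 : ℝ) ≤ rDiff A A s := Nat.cast_nonneg _
  calc _ = rDiff A A s * ((rDiff A A s : ℝ) * #B) ^ 2 := by
        rw [mul_pow, ← Real.rpow_natCast, ← Real.rpow_mul hr]
        norm_num
        ring
    _ ≤ rDiff A A s * (rDiff (diffSet A B) (diffSet A B) s * energy2 (interShift A s) B) := by
        gcongr
        exact sq_rDiff_mul_card_le A B s
    _ = _ := by ring

lemma card_filter_sub_mem_sub_mem (A : Finset ℝ) {a a' : ℝ} (ha : a ∈ A) :
    #{s ∈ diffSet A A | a - s ∈ A ∧ a' - s ∈ A} = rDiff A A (a - a') := by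
  rw [rDiff_eq_card_filter]
  refine card_nbij' (a - ·) (a - ·) ?_ ?_ ?_ ?_
  · intro s
    simp only [coe_filter, Set.mem_ofPred_eq, sub_sub_sub_cancel_left]
    exact fun h => h.2
  · intro x
    simp only [coe_filter, Set.mem_ofPred_eq, sub_sub_cancel]
    refine fun h => ⟨mem_diffSet.2 ⟨a, ha, x, h.1, rfl⟩, h.1, ?_⟩
    convert h.2 using 1
    ring
  · intro s _
    exact sub_sub_cancel a s
  · intro x _
    exact sub_sub_cancel a x

lemma energy2_eq_sum_rDiff_mul_rDiff (X Y : Finset ℝ) :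
    energy2 X Y = ∑ t ∈ diffSet X X, (rDiff X X t : ℝ) * rDiff Y Y t := by
  rw [energy2]
  exact_mod_cast sum_rDiff_sq X Y

lemma sum_energy2_interShift (A B : Finset ℝ) :
    ∑ s ∈ diffSet A A, energy2 (interShift A s) B =
      ∑ t ∈ diffSet A A, (rDiff A A t : ℝ) ^ 2 * rDiff B B t := by
  calc _ = ∑ s ∈ diffSet A A, ∑ p ∈ interShift A s ×ˢ interShift A s,
          (rDiff B B (p.1 - p.2) : ℝ) := by
        refine sum_congr rfl fun s _ => ?_
        rw [energy2_eq_sum_rDiff_mul_rDiff, sum_rDiff_mul, sum_product]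
    _ = ∑ p ∈ A ×ˢ A, ∑ s ∈ diffSet A A with p.1 - s ∈ A ∧ p.2 - s ∈ A,
          (rDiff B B (p.1 - p.2) : ℝ) := by
        refine sum_comm' fun s p => ?_
        simp only [interShift, mem_product, mem_filter]
        tauto
    _ = ∑ p ∈ A ×ˢ A, (rDiff A A (p.1 - p.2) : ℝ) * rDiff B B (p.1 - p.2) := by
        refine sum_congr rfl fun p hp => ?_
        rw [sum_const, nsmul_eq_mul, card_filter_sub_mem_sub_mem A (mem_product.1 hp).1]
    _ = _ := by
        rw [sum_product' (f := fun x y => (rDiff A A (x - y) : ℝ) * rDiff B B (x - y)),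
          ← sum_rDiff_mul A A fun t => (rDiff A A t : ℝ) * rDiff B B t]
        simp only [sq, mul_assoc]

lemma sum_sq_mul_le_rpow {ι : Type*} (s : Finset ι) {f g : ι → ℝ} (hf : ∀ i ∈ s, 0 ≤ f i)
    (hg : ∀ i ∈ s, 0 ≤ g i) :
    ∑ i ∈ s, f i ^ 2 * g i ≤
      (∑ i ∈ s, f i ^ (3 : ℝ)) ^ ((2 : ℝ) / 3) * (∑ i ∈ s, g i ^ (3 : ℝ)) ^ ((1 : ℝ) / 3) := by
  have hpq : Real.HolderConjugate (3 / 2) 3 := Real.holderConjugate_iff.2 ⟨by norm_num, by norm_num⟩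
  have hf3 : ∀ i ∈ s, (f i ^ 2) ^ ((3 : ℝ) / 2) = f i ^ (3 : ℝ) := fun i hi => by
    rw [← Real.rpow_natCast, ← Real.rpow_mul (hf i hi)]
    norm_num
  have := Real.inner_le_Lp_mul_Lq_of_nonneg s hpq (fun i hi => sq_nonneg (f i)) hg
  rwa [sum_congr rfl hf3, show (1 : ℝ) / (3 / 2) = 2 / 3 by norm_num] at this

lemma energyK_eq_sum_of_subset {A T : Finset ℝ} {k : ℝ} (hk : k ≠ 0) (h : diffSet A A ⊆ T) :
    energyK A k = ∑ t ∈ T, (rDiff A A t : ℝ) ^ k :=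
  sum_subset h fun t _ ht => by rw [rDiff_eq_zero_of_notMem ht, Nat.cast_zero, Real.zero_rpow hk]

lemma sum_rDiff_sq_mul_rDiff_le (A B : Finset ℝ) :
    ∑ t ∈ diffSet A A, (rDiff A A t : ℝ) ^ 2 * rDiff B B t ≤
      energyK A 3 ^ ((2 : ℝ) / 3) * energyK B 3 ^ ((1 : ℝ) / 3) := by
  have hT : ∑ t ∈ diffSet A A, (rDiff A A t : ℝ) ^ 2 * rDiff B B t =
      ∑ t ∈ diffSet A A ∪ diffSet B B, (rDiff A A t : ℝ) ^ 2 * rDiff B B t :=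
    sum_subset subset_union_left fun t _ ht => by simp [rDiff_eq_zero_of_notMem ht]
  rw [hT, energyK_eq_sum_of_subset three_ne_zero subset_union_left,
    energyK_eq_sum_of_subset three_ne_zero subset_union_right]
  exact sum_sq_mul_le_rpow _ (fun _ _ => Nat.cast_nonneg _) fun _ _ => Nat.cast_nonneg _

theorem stmt19_general (A B : Finset ℝ) :
    (energyK A ((3 : ℝ) / 2)) ^ 2 * (B.card : ℝ) ^ 2 ≤
      (energyK A 3) ^ ((2 : ℝ) / 3) * (energyK B 3) ^ ((1 : ℝ) / 3) *
        energy2 A (diffSet A B) := by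
  calc _ = (∑ s ∈ diffSet A A, (rDiff A A s : ℝ) ^ ((3 : ℝ) / 2) * #B) ^ 2 := by
        rw [← mul_pow, energyK, sum_mul]
    _ ≤ (∑ s ∈ diffSet A A, (rDiff A A s : ℝ) * rDiff (diffSet A B) (diffSet A B) s) *
          ∑ s ∈ diffSet A A, energy2 (interShift A s) B :=
        sum_sq_le_sum_mul_sum_of_sq_le_mul _ (fun _ _ => by positivity)
          (fun _ _ => sum_nonneg fun _ _ => sq_nonneg _)
          fun s _ => sq_rpow_three_halves_mul_card_le A B s
    _ ≤ energy2 A (diffSet A B) *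
          (energyK A 3 ^ ((2 : ℝ) / 3) * energyK B 3 ^ ((1 : ℝ) / 3)) := by
        rw [← energy2_eq_sum_rDiff_mul_rDiff, sum_energy2_interShift]
        gcongr
        · exact sum_nonneg fun _ _ => sq_nonneg _
        · exact sum_rDiff_sq_mul_rDiff_le A B
    _ = _ := mul_comm _ _

/-- Lemma 1, Li: `E_{1.5}(A)²·|B|² ≤ E₃(A)^{2/3}·E₃(B)^{1/3}·E(A,A−B)`. -/
theorem stmt19 (A B : Finset ℝ) (hA : A.Nonempty) (hB : B.Nonempty) :
    (energyK A ((3 : ℝ) / 2)) ^ 2 * (B.card : ℝ) ^ 2 ≤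
      (energyK A 3) ^ ((2 : ℝ) / 3) * (energyK B 3) ^ ((1 : ℝ) / 3) *
        energy2 A (diffSet A B) :=
  stmt19_general A B
end
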